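/- arXiv:2601.19572 — 2 statements merged into one kernel-verified Lean document; each statement's English description precedes it below -/
import Mathlib

section
/- Fix an integer d ≥ 2, a real number t > 0 and a > 0. Then for every λ ∈ ℂ with |Im λ| ≤ a and λ ≠ ia, λ ≠ −ia, one has |φ_λ(t e₁)| < φ_{ia}(t e₁). (Note that φ_{ia}(t e₁) = ∫_{S^{d-1}} e^{−a t ω·e₁} dσ(ω) is a positive real number.) -/
/-!
Write `λ = α + iβ` and let `M` be the moment generating function of the coordinate `ω₁` under `σ`.
The integrand `e^{iλtω₁}` has modulus `e^{-βtω₁}`, so `|φ_λ(te₁)| ≤ M(-βt)`, while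
`φ_{ia}(te₁) = M(-at)`. As `σ` is antipodally symmetric, `M(b) = ∫ cosh (bω₁) dσ`, which is
strictly increasing in `|b|`; this settles `|β| < a`. If `|β| = a`, then `α ≠ 0` and the triangle
inequality is strict: for `d ≥ 2` the sphere is connected, so `ω₁` takes every value in `[-1, 1]`
and the phase `αtω₁` of the integrand cannot stay in one class modulo `2π`.
-/

open MeasureTheory Complex
open scoped ENNReal

/-- The normalized surface measure (total mass 1) on the unit sphere `S^{d-1} ⊆ ℝ^d`. -/
noncomputable def sphereσ (d : ℕ) : Measure (Metric.sphere (0 : EuclideanSpace ℝ (Fin d)) 1) :=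
  (((volume : Measure (EuclideanSpace ℝ (Fin d))).toSphere) Set.univ)⁻¹ •
    ((volume : Measure (EuclideanSpace ℝ (Fin d))).toSphere)

/-- The Euclidean spherical function `φ_λ(x) = ∫_{S^{d-1}} e^{iλ x·ω} dσ(ω)`. -/
noncomputable def phiFn (d : ℕ) (lam : ℂ) (x : EuclideanSpace ℝ (Fin d)) : ℂ :=
  ∫ ω : Metric.sphere (0 : EuclideanSpace ℝ (Fin d)) 1,
    Complex.exp (Complex.I * lam * ((inner ℝ x (ω : EuclideanSpace ℝ (Fin d)) : ℝ) : ℂ)) ∂(sphereσ d)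

open Metric Set ProbabilityTheory

theorem MeasureTheory.Measure.map_neg_toSphere {E : Type*} [NormedAddCommGroup E]
    [NormedSpace ℝ E] [MeasurableSpace E] [BorelSpace E] (μ : Measure E) [μ.IsNegInvariant] :
    μ.toSphere.map Neg.neg = μ.toSphere := by
  ext s hs
  have hneg : Measurable (Neg.neg : sphere (0 : E) 1 → sphere (0 : E) 1) :=
    continuous_neg.measurable
  have himage : ((↑) '' (-s) : Set E) = -((↑) '' s) := by
    simp_rw [← image_neg_eq_neg, image_image, coe_neg_sphere]
  rw [Measure.map_apply hneg hs, μ.toSphere_apply' (hneg hs), μ.toSphere_apply' hs,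
    show Neg.neg ⁻¹' s = -s from rfl, himage, Set.smul_neg, Measure.measure_neg]

local notation "𝕊" d:max => Metric.sphere (0 : EuclideanSpace ℝ (Fin d)) 1

section sphereσ

variable {d : ℕ}

instance [NeZero d] : IsProbabilityMeasure (sphereσ d) where
  measure_univ := by
    rw [sphereσ, Measure.smul_apply, smul_eq_mul]
    exact ENNReal.inv_mul_cancel (Measure.measure_univ_ne_zero.2 (Measure.toSphere_ne_zero _))
      (measure_ne_top _ _)

instance : (sphereσ d).IsOpenPosMeasure :=
  Measure.isOpenPosMeasure_smul _ (ENNReal.inv_ne_zero.2 (measure_ne_top _ _))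

theorem measurePreserving_neg_sphereσ :
    MeasurePreserving (Neg.neg : 𝕊 d → 𝕊 d) (sphereσ d) (sphereσ d) :=
  ⟨continuous_neg.measurable, by rw [sphereσ, Measure.map_smul, Measure.map_neg_toSphere]⟩

theorem Continuous.integrable_sphereσ [NeZero d] {F : Type*} [NormedAddCommGroup F]
    {f : 𝕊 d → F} (hf : Continuous f) : Integrable f (sphereσ d) :=
  hf.integrable_of_hasCompactSupport (.of_compactSpace f)

end sphereσ

section sphereCoord

variable {d : ℕ}

def sphereCoord (i : Fin d) (ω : 𝕊 d) : ℝ := (ω : EuclideanSpace ℝ (Fin d)) i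

@[fun_prop]
theorem continuous_sphereCoord (i : Fin d) : Continuous (sphereCoord i) :=
  ((continuous_apply i).comp (PiLp.continuous_ofLp 2 _)).comp continuous_subtype_val

@[simp]
theorem sphereCoord_neg (i : Fin d) (ω : 𝕊 d) : sphereCoord i (-ω) = -sphereCoord i ω := by
  simp [sphereCoord, coe_neg_sphere]

theorem exists_sphereCoord_eq_one (i : Fin d) : ∃ ω : 𝕊 d, sphereCoord i ω = 1 :=
  ⟨⟨EuclideanSpace.single i 1, by simp⟩, by simp [sphereCoord]⟩

theorem exists_sphereCoord_eq (hd : 2 ≤ d) (i : Fin d) {v : ℝ} (hv : v ∈ Icc (-1) 1) :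
    ∃ ω : 𝕊 d, sphereCoord i ω = v := by
  have hrank : 1 < Module.rank ℝ (EuclideanSpace ℝ (Fin d)) := by
    rw [← Module.finrank_eq_rank, finrank_euclideanSpace_fin]; exact_mod_cast hd
  have : PreconnectedSpace (𝕊 d) :=
    Subtype.preconnectedSpace (isConnected_sphere hrank 0 zero_le_one).isPreconnected
  obtain ⟨ω, hω⟩ := exists_sphereCoord_eq_one i
  exact intermediate_value_univ (-ω) ω (continuous_sphereCoord i) (by simpa [hω] using hv)

end sphereCoord

theorem Real.exists_cos_mul_add_ne_one {α : ℝ} (hα : α ≠ 0) (θ : ℝ) :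
    ∃ v ∈ Icc (-1 : ℝ) 1, Real.cos (α * v + θ) ≠ 1 := by
  by_contra! h
  obtain ⟨n, hn⟩ := (Real.cos_eq_one_iff θ).1 (by simpa using h 0 (by norm_num))
  -- `0 < |α v| ≤ 1 < 2π`, so `cos (α v) = 1` is impossible
  set v := (max 1 |α|)⁻¹
  have hv : 0 < v := by positivity
  have hαv : |α * v| ≤ 1 := by
    rw [abs_mul, abs_of_pos hv]
    exact mul_inv_le_one_of_le₀ (le_max_right _ _) (by positivity)
  have hcos := h v ⟨by linarith, inv_le_one_of_one_le₀ (le_max_left _ _)⟩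
  rw [← hn, Real.cos_add_int_mul_two_pi,
    Real.cos_eq_one_iff_of_lt_of_lt (by linarith [abs_le.1 hαv, Real.pi_gt_three])
      (by linarith [abs_le.1 hαv, Real.pi_gt_three])] at hcos
  exact mul_ne_zero hα hv.ne' hcos

theorem norm_integral_lt_integral_norm_of_exists_re_lt {X : Type*} [TopologicalSpace X]
    [MeasurableSpace X] {μ : Measure X} [μ.IsOpenPosMeasure] {g : X → ℂ} (hg : Continuous g)
    (hint : Integrable g μ) (h : ∀ θ : ℝ, ∃ x, (cexp (θ * I) * g x).re < ‖g x‖) :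
    ‖∫ x, g x ∂μ‖ < ∫ x, ‖g x‖ ∂μ := by
  set z := ∫ x, g x ∂μ
  obtain ⟨x, hx⟩ := h (-z.arg)
  set c := cexp (↑(-z.arg) * I)
  have hc : ‖c‖ = 1 := norm_exp_ofReal_mul_I _
  have hcg : Integrable (fun x => (c * g x).re) μ := (hint.const_mul c).re
  have hcz : ‖z‖ = ∫ x, (c * g x).re ∂μ := by
    have : c * z = ‖z‖ := by
      conv_lhs => rw [← norm_mul_exp_arg_mul_I z]
      rw [mul_left_comm, ← Complex.exp_add]
      simp
    rw [← ofReal_re ‖z‖, ← this, ← integral_const_mul]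
    exact (integral_re (hint.const_mul c)).symm
  have hpos : 0 < ∫ x, (‖g x‖ - (c * g x).re) ∂μ := by
    refine integral_pos_of_integrable_nonneg_nonzero (by fun_prop) (hint.norm.sub hcg)
      (fun x => sub_nonneg.2 ?_) (sub_pos.2 hx).ne'
    calc (c * g x).re ≤ ‖c * g x‖ := re_le_norm _
      _ = ‖g x‖ := by rw [norm_mul, hc, one_mul]
  rw [integral_sub hint.norm hcg] at hpos
  linarith

section mgf

variable {d : ℕ} (i : Fin d)

theorem mgf_sphereCoord_neg (b : ℝ) :
    mgf (sphereCoord i) (sphereσ d) (-b) = mgf (sphereCoord i) (sphereσ d) b := by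
  rw [← mgf_neg, mgf, mgf, ← measurePreserving_neg_sphereσ.integral_comp
    (Homeomorph.neg (𝕊 d)).measurableEmbedding]
  simp

theorem mgf_sphereCoord_abs (b : ℝ) :
    mgf (sphereCoord i) (sphereσ d) |b| = mgf (sphereCoord i) (sphereσ d) b := by
  rcases abs_choice b with h | h <;> rw [h]
  exact mgf_sphereCoord_neg i b

theorem mgf_sphereCoord_eq_integral_cosh [NeZero d] (b : ℝ) :
    mgf (sphereCoord i) (sphereσ d) b = ∫ ω, Real.cosh (b * sphereCoord i ω) ∂(sphereσ d) := by
  have hint (c : ℝ) : Integrable (fun ω => Real.exp (c * sphereCoord i ω)) (sphereσ d) :=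
    (by fun_prop : Continuous _).integrable_sphereσ
  calc mgf (sphereCoord i) (sphereσ d) b
      = (mgf (sphereCoord i) (sphereσ d) b + mgf (sphereCoord i) (sphereσ d) (-b)) / 2 := by
        rw [mgf_sphereCoord_neg]; ring
    _ = ∫ ω, Real.cosh (b * sphereCoord i ω) ∂(sphereσ d) := by
        rw [mgf, mgf, ← integral_add (hint b) (hint (-b)), ← integral_div]
        simp [Real.cosh_eq]

theorem mgf_sphereCoord_strictMonoOn [NeZero d] :
    StrictMonoOn (mgf (sphereCoord i) (sphereσ d)) (Ici 0) := by
  intro b hb c hc hbc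
  rw [mgf_sphereCoord_eq_integral_cosh, mgf_sphereCoord_eq_integral_cosh, ← sub_pos,
    ← integral_sub (by fun_prop : Continuous _).integrable_sphereσ
      (by fun_prop : Continuous _).integrable_sphereσ]
  obtain ⟨ω, hω⟩ := exists_sphereCoord_eq_one i
  have habs : |b| < |c| := by rwa [abs_of_nonneg hb, abs_of_nonneg hc]
  refine integral_pos_of_integrable_nonneg_nonzero (x := ω) (by fun_prop)
    (by fun_prop : Continuous _).integrable_sphereσ (fun ω => sub_nonneg.2 ?_) ?_
  · rw [Real.cosh_le_cosh, abs_mul, abs_mul]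
    exact mul_le_mul_of_nonneg_right habs.le (abs_nonneg _)
  · simpa [hω] using sub_ne_zero.2 (Real.cosh_lt_cosh.2 habs).ne'

theorem mgf_sphereCoord_le_of_abs_le [NeZero d] {b c : ℝ} (h : |b| ≤ |c|) :
    mgf (sphereCoord i) (sphereσ d) b ≤ mgf (sphereCoord i) (sphereσ d) c := by
  rw [← mgf_sphereCoord_abs i b, ← mgf_sphereCoord_abs i c]
  exact (mgf_sphereCoord_strictMonoOn i).monotoneOn (abs_nonneg b) (abs_nonneg c) h

theorem mgf_sphereCoord_lt_of_abs_lt [NeZero d] {b c : ℝ} (h : |b| < |c|) :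
    mgf (sphereCoord i) (sphereσ d) b < mgf (sphereCoord i) (sphereσ d) c := by
  rw [← mgf_sphereCoord_abs i b, ← mgf_sphereCoord_abs i c]
  exact mgf_sphereCoord_strictMonoOn i (abs_nonneg b) (abs_nonneg c) h

end mgf

section phiFn

variable {d : ℕ} (i : Fin d)

theorem phiFn_smul_single (lam : ℂ) (t : ℝ) :
    phiFn d lam (t • EuclideanSpace.single i 1)
      = ∫ ω, cexp (I * lam * ((t * sphereCoord i ω : ℝ) : ℂ)) ∂(sphereσ d) := by
  simp [phiFn, real_inner_smul_left, EuclideanSpace.inner_single_left, sphereCoord]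

theorem phiFn_I_mul_smul_single (a t : ℝ) :
    phiFn d (I * a) (t • EuclideanSpace.single i 1)
      = mgf (sphereCoord i) (sphereσ d) (-(a * t)) := by
  rw [phiFn_smul_single, mgf]
  beta_reduce
  rw [← integral_complex_ofReal]
  congr 1 with ω
  rw [ofReal_exp, ← mul_assoc, I_mul_I]
  push_cast
  ring_nf

theorem norm_cexp_I_mul_ofReal (lam : ℂ) (s : ℝ) :
    ‖cexp (I * lam * s)‖ = Real.exp (-lam.im * s) := by
  simp [norm_exp]

theorem norm_phiFn_smul_single_le [NeZero d] (lam : ℂ) (t : ℝ) :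
    ‖phiFn d lam (t • EuclideanSpace.single i 1)‖
      ≤ mgf (sphereCoord i) (sphereσ d) (-(lam.im * t)) := by
  rw [phiFn_smul_single, mgf]
  refine (norm_integral_le_integral_norm _).trans_eq ?_
  congr 1 with ω
  rw [norm_cexp_I_mul_ofReal]
  ring_nf

theorem norm_phiFn_smul_single_lt [NeZero d] (hd : 2 ≤ d) {lam : ℂ} {t : ℝ}
    (h : lam.re * t ≠ 0) :
    ‖phiFn d lam (t • EuclideanSpace.single i 1)‖
      < mgf (sphereCoord i) (sphereσ d) (-(lam.im * t)) := by
  rw [phiFn_smul_single, mgf]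
  have hg : Continuous fun ω => cexp (I * lam * ((t * sphereCoord i ω : ℝ) : ℂ)) := by fun_prop
  refine (norm_integral_lt_integral_norm_of_exists_re_lt hg hg.integrable_sphereσ ?_).trans_eq
    ?_
  · intro θ
    obtain ⟨v, hv, hcos⟩ := Real.exists_cos_mul_add_ne_one h θ
    obtain ⟨ω, rfl⟩ := exists_sphereCoord_eq hd i hv
    refine ⟨ω, ?_⟩
    have hre : (θ * I + I * lam * ((t * sphereCoord i ω : ℝ) : ℂ)).re
        = -lam.im * (t * sphereCoord i ω) := by simp
    have him : (θ * I + I * lam * ((t * sphereCoord i ω : ℝ) : ℂ)).im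
        = lam.re * t * sphereCoord i ω + θ := by simp; ring
    rw [← exp_add, exp_re, norm_cexp_I_mul_ofReal, hre, him]
    exact mul_lt_of_lt_one_right (Real.exp_pos _) ((Real.cos_le_one _).lt_of_ne hcos)
  · congr 1 with ω
    rw [norm_cexp_I_mul_ofReal]
    ring_nf

end phiFn

/-- For `λ` in the strip `|Im λ| ≤ a` with `λ ≠ ± i a`, one has `|φ_λ(t e₁)| < φ_{ia}(t e₁)`
(the latter being a positive real number, expressed here via its real part). -/
theorem statement0 (d : ℕ) (hd : 2 ≤ d) (t a : ℝ) (ht : 0 < t)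
    (lam : ℂ) (hstrip : |lam.im| ≤ a)
    (h1 : lam ≠ Complex.I * (a : ℂ)) (h2 : lam ≠ -(Complex.I * (a : ℂ))) :
    ‖phiFn d lam (t • EuclideanSpace.single (⟨0, by omega⟩ : Fin d) 1)‖
      < (phiFn d (Complex.I * (a : ℂ)) (t • EuclideanSpace.single (⟨0, by omega⟩ : Fin d) 1)).re := by
  have : NeZero d := ⟨by omega⟩
  have ha : 0 ≤ a := (abs_nonneg _).trans hstrip
  have habs (b : ℝ) : |-(b * t)| = |b| * t := by rw [abs_neg, abs_mul, abs_of_pos ht]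
  rw [phiFn_I_mul_smul_single, ofReal_re]
  by_cases hre : lam.re = 0
  · have hlt : |lam.im| < a := by
      refine hstrip.lt_of_ne fun h => ?_
      rcases (abs_eq ha).1 h with h | h
      · exact h1 (Complex.ext (by simp [hre]) (by simp [h]))
      · exact h2 (Complex.ext (by simp [hre]) (by simp [h]))
    calc _ ≤ _ := norm_phiFn_smul_single_le _ lam t
      _ < _ := mgf_sphereCoord_lt_of_abs_lt _ (by
        rw [habs, habs, abs_of_nonneg ha]; exact mul_lt_mul_of_pos_right hlt ht)
  · calc _ < _ := norm_phiFn_smul_single_lt _ hd (mul_ne_zero hre ht.ne')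
      _ ≤ _ := mgf_sphereCoord_le_of_abs_le _ (by
        rw [habs, habs, abs_of_nonneg ha]; exact mul_le_mul_of_nonneg_right hstrip ht.le)
end

section
/- Let d ≥ 1, let ζ^(1), …, ζ^(k) be distinct vectors in ℝ^d, let Q₁, …, Q_k be polynomials in d variables with complex coefficients, and let f : ℝ^d → ℂ be the function f(x) = Σ_{j=1}^k Q_j(x) e^{i x·ζ^(j)}. Then: (1) if f ∈ L^p(ℝ^d) for some 1 ≤ p < ∞, then all the polynomials Q_j are identically zero (hence f ≡ 0); (2) if f ∈ L^∞(ℝ^d), then all the polynomials Q_j are constant. -/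
/-!
Translating `f` by `a` and subtracting `planeWave (ζ m) a * f` gives an exponential polynomial
with the same frequencies and coefficients
`planeWave (ζ j) a • Q j (· + a) - planeWave (ζ m) a • Q j`.
No coefficient gains degree, the `m`-th one loses degree, and if `a` separates the waves of
`ζ l` and `ζ m` the `l`-th one has degree `< n` only if `Q l` does. Both `L^p` and `L^∞` are stable
under this operation, so induction on the degrees reduces to a single term `P(x) e^{i x·ξ}`,
whose modulus is `|P|`. The differences `P(· + a) - P` are again of this form: for `p < ∞` they
vanish, so `P` is a constant in `L^p` of an infinite measure, hence zero; for `p = ∞` they are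
constants `c`, and boundedness of `P(x + n a) = P(x) + n c` forces `c = 0`.
-/

open MeasureTheory Complex
open scoped ENNReal

noncomputable section

namespace MvPolynomial

variable {σ R : Type*} [CommRing R]

variable (σ R) in
def totalDegreeLT (n : ℕ) : Submodule R (MvPolynomial σ R) :=
  restrictSupport R {s | s.degree < n}

def totalDegreeBound (p : MvPolynomial σ R) : ℕ :=
  p.support.sup fun s => s.degree + 1

def shift (a : σ → R) : MvPolynomial σ R →ₐ[R] MvPolynomial σ R :=
  aeval fun i => X i + C (a i)

variable {n m : ℕ} {p : MvPolynomial σ R}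

theorem mem_totalDegreeLT : p ∈ totalDegreeLT σ R n ↔ ∀ s ∈ p.support, s.degree < n := by
  simp [totalDegreeLT, mem_restrictSupport_iff, Set.subset_def]

theorem totalDegreeLT_mono (h : n ≤ m) : totalDegreeLT σ R n ≤ totalDegreeLT σ R m :=
  restrictSupport_mono R fun _ hs => lt_of_lt_of_le hs h

theorem mem_totalDegreeLT_zero : p ∈ totalDegreeLT σ R 0 ↔ p = 0 := by
  simp [mem_totalDegreeLT, ← support_eq_empty, Finset.eq_empty_iff_forall_notMem]

open scoped Pointwise in
theorem mem_totalDegreeLT_one : p ∈ totalDegreeLT σ R 1 ↔ ∃ c, p = C c := by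
  have : {s : σ →₀ ℕ | s.degree < 1} = 0 := by
    ext s; simp [Finsupp.degree_eq_zero_iff]
  rw [totalDegreeLT, this, restrictSupport_zero, Submodule.mem_one]
  simp [algebraMap_eq, eq_comm]

theorem mem_totalDegreeLT_iff_totalDegreeBound_le :
    p ∈ totalDegreeLT σ R n ↔ totalDegreeBound p ≤ n := by
  simp [mem_totalDegreeLT, totalDegreeBound, Finset.sup_le_iff]

theorem mul_X_mem_totalDegreeLT_succ (i : σ) :
    p * X i ∈ totalDegreeLT σ R (n + 1) ↔ p ∈ totalDegreeLT σ R n := by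
  simp [mem_totalDegreeLT, map_add, Finsupp.degree_single]

theorem shift_monomial_sub_mem_totalDegreeLT (a : σ → R) (s : σ →₀ ℕ) (c : R) :
    ∀ n, monomial s c ∈ totalDegreeLT σ R (n + 1) →
      shift a (monomial s c) - monomial s c ∈ totalDegreeLT σ R n := by
  refine induction_on_monomial (motive := fun q => ∀ n, q ∈ totalDegreeLT σ R (n + 1) →
      shift a q - q ∈ totalDegreeLT σ R n) ?_ ?_ s c
  · intro c n _
    simp [shift]
  · rintro p i ih (_ | n) hp
    · rw [mul_X_mem_totalDegreeLT_succ, mem_totalDegreeLT_zero] at hp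
      simp [hp]
    · rw [mul_X_mem_totalDegreeLT_succ] at hp
      have hdiff := ih n hp
      have hshift : shift a p ∈ totalDegreeLT σ R (n + 1) := by
        simpa using add_mem hp (totalDegreeLT_mono n.le_succ hdiff)
      have : shift a (p * X i) - p * X i = (shift a p - p) * X i + a i • shift a p := by
        simp only [map_mul, shift, aeval_X, smul_eq_C_mul]
        ring
      rw [this]
      exact add_mem ((mul_X_mem_totalDegreeLT_succ i).2 hdiff) (Submodule.smul_mem _ _ hshift)


theorem shift_sub_mem_totalDegreeLT (a : σ → R) (hp : p ∈ totalDegreeLT σ R (n + 1)) :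
    shift a p - p ∈ totalDegreeLT σ R n := by
  have hspan : totalDegreeLT σ R (n + 1) ≤
      (totalDegreeLT σ R n).comap ((shift a).toLinearMap - LinearMap.id) := by
    rw [totalDegreeLT, restrictSupport_eq_span, Submodule.span_le]
    rintro _ ⟨s, hs, rfl⟩
    exact shift_monomial_sub_mem_totalDegreeLT a s 1 n
      (by simpa [totalDegreeLT] using Or.inl hs)
  exact hspan hp

theorem shift_mem_totalDegreeLT (a : σ → R) (hp : p ∈ totalDegreeLT σ R n) :
    shift a p ∈ totalDegreeLT σ R n := by
  cases n with
  | zero => simp [mem_totalDegreeLT_zero.1 hp]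
  | succ n =>
    simpa using add_mem hp (totalDegreeLT_mono n.le_succ (shift_sub_mem_totalDegreeLT a hp))

theorem eval_shift (x a : σ → R) (p : MvPolynomial σ R) :
    eval x (shift a p) = eval (x + a) p := by
  induction p using MvPolynomial.induction_on with
  | C c => simp [shift]
  | add p q hp hq => simp [hp, hq]
  | mul_X p i hp => simp only [map_mul, hp]; simp [shift]

theorem totalDegreeBound_eq_zero_iff : totalDegreeBound p = 0 ↔ p = 0 := by
  rw [← nonpos_iff_eq_zero, ← mem_totalDegreeLT_iff_totalDegreeBound_le, mem_totalDegreeLT_zero]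

theorem sum_totalDegreeBound_smul_shift_sub_smul_lt {κ : Type*} [Fintype κ]
    (Q : κ → MvPolynomial σ R) (a : σ → R) (β : κ → R) {m : κ} (hm : Q m ≠ 0) :
    ∑ j, totalDegreeBound (β j • shift a (Q j) - β m • Q j) < ∑ j, totalDegreeBound (Q j) := by
  have hQ : ∀ j, Q j ∈ totalDegreeLT σ R (totalDegreeBound (Q j)) := fun j =>
    mem_totalDegreeLT_iff_totalDegreeBound_le.2 le_rfl
  refine Finset.sum_lt_sum (fun j _ => mem_totalDegreeLT_iff_totalDegreeBound_le.1 ?_)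
    ⟨m, Finset.mem_univ m, ?_⟩
  · exact sub_mem (Submodule.smul_mem _ _ (shift_mem_totalDegreeLT a (hQ j)))
      (Submodule.smul_mem _ _ (hQ j))
  · obtain ⟨D, hD⟩ : ∃ D, totalDegreeBound (Q m) = D + 1 :=
      Nat.exists_eq_add_one.2 (Nat.pos_of_ne_zero (totalDegreeBound_eq_zero_iff.not.2 hm))
    rw [← smul_sub, hD, Nat.lt_succ_iff, ← mem_totalDegreeLT_iff_totalDegreeBound_le]
    exact Submodule.smul_mem _ _ (shift_sub_mem_totalDegreeLT a (hD ▸ hQ m))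

theorem mem_totalDegreeLT_of_smul_shift_sub_smul_mem {K : Type*} [Field K]
    {p : MvPolynomial σ K} {a : σ → K} {β γ : K} (hβγ : β ≠ γ)
    (h : β • shift a p - γ • p ∈ totalDegreeLT σ K n) :
    p ∈ totalDegreeLT σ K n := by
  suffices ∀ j, p ∈ totalDegreeLT σ K (n + j) → p ∈ totalDegreeLT σ K n from
    this _ (totalDegreeLT_mono (Nat.le_add_left _ n)
      (mem_totalDegreeLT_iff_totalDegreeBound_le.2 le_rfl))
  intro j
  induction j with
  | zero => exact id
  | succ j ih =>
    intro hp
    refine ih ?_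
    have hlower : (γ - β) • p ∈ totalDegreeLT σ K (n + j) := by
      have : (γ - β) • p = β • (shift a p - p) - (β • shift a p - γ • p) := by
        simp only [smul_sub, sub_smul]
        abel
      rw [this]
      exact sub_mem (Submodule.smul_mem _ _ (shift_sub_mem_totalDegreeLT a hp))
        (totalDegreeLT_mono (Nat.le_add_right n j) h)
    simpa [smul_smul, inv_mul_cancel₀ (sub_ne_zero.2 hβγ.symm)] using
      Submodule.smul_mem _ (γ - β)⁻¹ hlower

end MvPolynomial

theorem eq_zero_of_memLp_of_norm_eq {α E : Type*} [MeasurableSpace α] {μ : Measure α}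
    [NormedAddCommGroup E] {f : α → E} {p : ℝ≥0∞} {r : ℝ} (hp0 : p ≠ 0) (hp : p ≠ ⊤)
    (hμ : μ Set.univ = ⊤) (hf : MemLp f p μ) (hr : ∀ x, ‖f x‖ = r) : r = 0 := by
  have hconst : MemLp (fun _ => r) p μ := funext hr ▸ hf.norm
  simpa [hμ] using (memLp_const_iff hp0 hp).1 hconst

theorem Continuous.norm_le_of_ae_norm_le {X E : Type*} [TopologicalSpace X] [MeasurableSpace X]
    {μ : Measure X} [μ.IsOpenPosMeasure] [NormedAddCommGroup E] {g : X → E} (hg : Continuous g)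
    {M : ℝ} (h : ∀ᵐ x ∂μ, ‖g x‖ ≤ M) (x : X) : ‖g x‖ ≤ M := by
  have hclosed : IsClosed {x | ‖g x‖ ≤ M} := isClosed_le hg.norm continuous_const
  have huniv : {x | ‖g x‖ ≤ M} = Set.univ :=
    hclosed.closure_eq ▸ (Measure.dense_of_ae h).closure_eq
  exact (Set.eq_univ_iff_forall.1 huniv x :)

theorem eq_zero_of_bounded_of_forall_add_eq_add {G E : Type*} [AddMonoid G]
    [NormedAddCommGroup E] [NormedSpace ℝ E] {g : G → E} {M : ℝ} (hM : ∀ x, ‖g x‖ ≤ M)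
    {a : G} {c : E} (h : ∀ x, g (x + a) = g x + c) : c = 0 := by
  have hiter : ∀ n : ℕ, g (n • a) = g 0 + n • c := by
    intro n
    induction n with
    | zero => simp
    | succ n ih => rw [succ_nsmul, h, ih, succ_nsmul, add_assoc]
  by_contra hc
  obtain ⟨n, hn⟩ := exists_nat_gt (2 * M / ‖c‖)
  have hle : n * ‖c‖ ≤ 2 * M := calc
    n * ‖c‖ = ‖n • c‖ := by rw [RCLike.norm_nsmul ℝ, nsmul_eq_mul]
    _ ≤ ‖g (n • a)‖ + ‖g 0‖ := by simpa [hiter] using norm_sub_le (g 0 + n • c) (g 0)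
    _ ≤ 2 * M := by linarith [hM (n • a), hM 0]
  rw [div_lt_iff₀ (norm_pos_iff.2 hc)] at hn
  linarith

section PlaneWave

variable {F : Type*} [NormedAddCommGroup F] [InnerProductSpace ℝ F]

def planeWave (ξ x : F) : ℂ := exp (I * (inner ℝ x ξ : ℂ))

theorem planeWave_add_left (ξ x a : F) :
    planeWave ξ (x + a) = planeWave ξ x * planeWave ξ a := by
  rw [planeWave, planeWave, planeWave, ← exp_add, inner_add_left, ofReal_add, mul_add]

theorem planeWave_add_right (ξ η x : F) :
    planeWave (ξ + η) x = planeWave ξ x * planeWave η x := by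
  rw [planeWave, planeWave, planeWave, ← exp_add, inner_add_right, ofReal_add, mul_add]

theorem norm_planeWave (ξ x : F) : ‖planeWave ξ x‖ = 1 := by
  rw [planeWave, mul_comm, norm_exp_ofReal_mul_I]

theorem planeWave_ne_zero (ξ x : F) : planeWave ξ x ≠ 0 := exp_ne_zero _

theorem exists_planeWave_ne {ξ η : F} (h : ξ ≠ η) : ∃ a, planeWave ξ a ≠ planeWave η a := by
  set w := ξ - η
  have hw : ‖w‖ ≠ 0 := norm_ne_zero_iff.2 (sub_ne_zero.2 h)
  -- at `a = π w / ‖w‖²` the two waves differ by the factor `exp (I π) = -1`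
  refine ⟨(Real.pi / ‖w‖ ^ 2) • w, fun heq => planeWave_ne_zero η ((Real.pi / ‖w‖ ^ 2) • w) ?_⟩
  have hπ : planeWave w ((Real.pi / ‖w‖ ^ 2) • w) = -1 := by
    rw [planeWave, real_inner_smul_left, real_inner_self_eq_norm_sq,
      div_mul_cancel₀ _ (pow_ne_zero 2 hw), mul_comm, exp_pi_mul_I]
  have := planeWave_add_right w η ((Real.pi / ‖w‖ ^ 2) • w)
  rw [sub_add_cancel, heq, hπ] at this
  linear_combination this / 2

end PlaneWave

section ExpPoly

open MvPolynomial

variable {ι : Type*}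

def polyFun (P : MvPolynomial ι ℂ) (x : EuclideanSpace ℝ ι) : ℂ := eval (fun i => (x i : ℂ)) P

theorem polyFun_shift (a x : EuclideanSpace ℝ ι) (P : MvPolynomial ι ℂ) :
    polyFun (shift (fun i => (a i : ℂ)) P) x = polyFun P (x + a) := by
  simp only [polyFun, eval_shift]
  congr 2
  funext i
  simp

theorem continuous_polyFun (P : MvPolynomial ι ℂ) : Continuous (polyFun P) :=
  (continuous_eval P).comp (continuous_pi fun i =>
    continuous_ofReal.comp ((continuous_apply i).comp (PiLp.continuous_ofLp 2 _)))

theorem eq_C_of_polyFun_eq {P : MvPolynomial ι ℂ} {c : ℂ} (h : ∀ x, polyFun P x = c) :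
    P = C c := by
  refine funext_set (fun _ => Set.range ((↑) : ℝ → ℂ))
    (fun _ => Set.infinite_range_of_injective ofReal_injective) fun z hz => ?_
  choose x hx using hz
  simpa [← h (WithLp.toLp 2 fun i => x i (Set.mem_univ i)), polyFun] using
    congrArg (eval · P) (funext fun i => (hx i (Set.mem_univ i)).symm)

variable [Fintype ι]

def expPoly {κ : Type*} [Fintype κ] (ζ : κ → EuclideanSpace ℝ ι) (Q : κ → MvPolynomial ι ℂ)
    (x : EuclideanSpace ℝ ι) : ℂ :=
  ∑ j, polyFun (Q j) x * planeWave (ζ j) x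

theorem eq_zero_of_memLp_polyFun_mul_planeWave [Nonempty ι] {p : ℝ≥0∞}
    (hp0 : p ≠ 0) (hp : p ≠ ⊤) {P : MvPolynomial ι ℂ} {ξ : EuclideanSpace ℝ ι}
    (hP : MemLp (fun x => polyFun P x * planeWave ξ x) p volume)
    (hshift : ∀ a : EuclideanSpace ℝ ι, shift (fun i => (a i : ℂ)) P = P) : P = 0 := by
  have hconst : ∀ x, polyFun P x = polyFun P 0 := fun x => by
    simpa [hshift] using (polyFun_shift x 0 P).symm
  have h0 := eq_zero_of_memLp_of_norm_eq hp0 hp (measure_univ_of_isAddLeftInvariant volume) hP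
    fun x => by rw [norm_mul, norm_planeWave, mul_one, hconst]
  simpa using eq_C_of_polyFun_eq fun x => (hconst x).trans (norm_eq_zero.1 h0)

theorem exists_eq_C_of_memLp_top_polyFun_mul_planeWave {P : MvPolynomial ι ℂ}
    {ξ : EuclideanSpace ℝ ι} (hP : MemLp (fun x => polyFun P x * planeWave ξ x) ⊤ volume)
    (hshift : ∀ a : EuclideanSpace ℝ ι, ∃ c, shift (fun i => (a i : ℂ)) P - P = C c) :
    ∃ c, P = C c := by
  have hbound := (continuous_polyFun P).norm_le_of_ae_norm_le (μ := volume)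
    ((ae_le_lpNorm_exponent_top hP).mono fun x hx => by simpa [norm_planeWave] using hx)
  refine ⟨polyFun P 0, eq_C_of_polyFun_eq fun a => ?_⟩
  obtain ⟨c, hc⟩ := hshift a
  have hcocycle : ∀ x, polyFun P (x + a) = polyFun P x + c := fun x => by
    have := congrArg (fun q => polyFun q x) hc
    simp only [polyFun, map_sub, eval_C] at this
    rw [← polyFun, polyFun_shift, sub_eq_iff_eq_add'] at this
    exact this
  simpa [eq_zero_of_bounded_of_forall_add_eq_add hbound hcocycle] using hcocycle 0

theorem expPoly_add_sub {κ : Type*} [Fintype κ] (ζ : κ → EuclideanSpace ℝ ι)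
    (Q : κ → MvPolynomial ι ℂ) (a x : EuclideanSpace ℝ ι) (c : ℂ) :
    expPoly ζ Q (x + a) - c * expPoly ζ Q x =
      expPoly ζ (fun j => planeWave (ζ j) a • shift (fun i => (a i : ℂ)) (Q j) - c • Q j) x := by
  simp only [expPoly, Finset.mul_sum, ← Finset.sum_sub_distrib]
  refine Finset.sum_congr rfl fun j _ => ?_
  have hshift := polyFun_shift a x (Q j)
  simp only [polyFun] at hshift ⊢
  simp only [map_sub, smul_eval, hshift, planeWave_add_left]
  ring

theorem mem_totalDegreeLT_of_expPoly_mem {S : Set (EuclideanSpace ℝ ι → ℂ)}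
    (hS : ∀ f ∈ S, ∀ a c, (fun x => f (x + a) - c * f x) ∈ S) {n : ℕ}
    (hmode : ∀ (P : MvPolynomial ι ℂ) (ξ : EuclideanSpace ℝ ι),
      (fun x => polyFun P x * planeWave ξ x) ∈ S →
      (∀ a : EuclideanSpace ℝ ι, shift (fun i => (a i : ℂ)) P - P ∈ totalDegreeLT ι ℂ n) →
      P ∈ totalDegreeLT ι ℂ n)
    {κ : Type*} [Fintype κ] {ζ : κ → EuclideanSpace ℝ ι} (hζ : Function.Injective ζ)
    (Q : κ → MvPolynomial ι ℂ) (hQ : expPoly ζ Q ∈ S) (l : κ) : Q l ∈ totalDegreeLT ι ℂ n := by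
  induction hN : ∑ j, totalDegreeBound (Q j) using Nat.strong_induction_on generalizing Q with
  | _ N ih =>
  have hdiff : ∀ a m, Q m ≠ 0 → planeWave (ζ l) a • shift (fun i => (a i : ℂ)) (Q l) -
      planeWave (ζ m) a • Q l ∈ totalDegreeLT ι ℂ n := by
    intro a m hm
    have hlt := sum_totalDegreeBound_smul_shift_sub_smul_lt Q (fun i => (a i : ℂ))
      (fun j => planeWave (ζ j) a) hm
    refine ih _ (hN ▸ hlt) _ ?_ rfl
    convert hS _ hQ a (planeWave (ζ m) a) using 1
    funext x
    exact (expPoly_add_sub ζ Q a x _).symm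
  by_cases hsingle : ∀ m, m ≠ l → Q m = 0
  · refine hmode (Q l) (ζ l) ?_ fun a => ?_
    · convert hQ using 1
      funext x
      rw [expPoly, Finset.sum_eq_single l (fun m _ hm => by simp [polyFun, hsingle m hm])
        (by simp)]
    · rcases eq_or_ne (Q l) 0 with hl | hl
      · simp [hl]
      · exact (Submodule.smul_mem_iff _ (planeWave_ne_zero (ζ l) a)).1
          (smul_sub (planeWave (ζ l) a) _ (Q l) ▸ hdiff a l hl)
  · push Not at hsingle
    obtain ⟨m, hml, hm⟩ := hsingle
    obtain ⟨a, ha⟩ := exists_planeWave_ne (hζ.ne hml.symm)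
    exact mem_totalDegreeLT_of_smul_shift_sub_smul_mem ha (hdiff a m hm)

end ExpPoly

end

/-- If `f(x) = Σ_j Q_j(x) e^{i x·ζ⁽ʲ⁾}` with distinct frequencies `ζ⁽ʲ⁾` and polynomial
coefficients `Q_j`, then `f ∈ L^p` for some `1 ≤ p < ∞` forces all `Q_j = 0`, while
`f ∈ L^∞` forces all `Q_j` to be constant. -/
theorem statement18 (d k : ℕ) (hd : 1 ≤ d)
    (ζ : Fin k → EuclideanSpace ℝ (Fin d)) (hζ : Function.Injective ζ)
    (Q : Fin k → MvPolynomial (Fin d) ℂ)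
    (f : EuclideanSpace ℝ (Fin d) → ℂ)
    (hf : ∀ x, f x = ∑ j : Fin k,
      (MvPolynomial.eval (fun i : Fin d => ((x i : ℝ) : ℂ)) (Q j)) *
        Complex.exp (Complex.I * ((inner ℝ x (ζ j) : ℝ) : ℂ))) :
    (∀ p : ℝ≥0∞, 1 ≤ p → p < ⊤ → MemLp f p volume → ∀ j, Q j = 0) ∧
    (MemLp f ⊤ volume → ∀ j, ∃ c : ℂ, Q j = MvPolynomial.C c) := by
  have hS : ∀ (q : ℝ≥0∞), ∀ g ∈ {g | MemLp g q volume}, ∀ a c,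
      (fun x => g (x + a) - c * g x) ∈ {g : EuclideanSpace ℝ (Fin d) → ℂ | MemLp g q volume} :=
    fun q g hg a c => (hg.comp_measurePreserving (measurePreserving_add_right volume a)).sub
      (hg.const_mul c)
  obtain rfl : f = expPoly ζ Q := funext hf
  refine ⟨fun p hp1 hp hLp j => ?_, fun hLinf j => ?_⟩
  · have : Nonempty (Fin d) := ⟨⟨0, hd⟩⟩
    refine MvPolynomial.mem_totalDegreeLT_zero.1 <|
      mem_totalDegreeLT_of_expPoly_mem (hS p) (fun P ξ hP hshift => ?_) hζ Q hLp j
    exact MvPolynomial.mem_totalDegreeLT_zero.2 <|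
      eq_zero_of_memLp_polyFun_mul_planeWave (zero_lt_one.trans_le hp1).ne' hp.ne hP
        fun a => sub_eq_zero.1 (MvPolynomial.mem_totalDegreeLT_zero.1 (hshift a))
  · refine MvPolynomial.mem_totalDegreeLT_one.1 <|
      mem_totalDegreeLT_of_expPoly_mem (hS ⊤) (fun P ξ hP hshift => ?_) hζ Q hLinf j
    exact MvPolynomial.mem_totalDegreeLT_one.2 <|
      exists_eq_C_of_memLp_top_polyFun_mul_planeWave hP
        fun a => MvPolynomial.mem_totalDegreeLT_one.1 (hshift a)
end
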